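/- arXiv:1309.4975 — 2 statements merged into one kernel-verified Lean document; each statement's English description precedes it below -/
import Mathlib

section
/- Let $G$ be a distribution function in the Gumbel max-domain of attraction with positive scaling function $w$. Then $w$ is self-neglecting: for every $x \in \mathbb{R}$, $\lim_{v\to\infty} w(v + x/w(v))/w(v) = 1$. -/
/-!
Write `U = 1 - G` and `t v = v + x / w v`. Since `U (t v) / U v → exp (-x)` and `U v → 0`, also
`t v → ∞`, so the Gumbel limit may be applied at `t v`: chaining the two limits gives
`U (t v + y / w (t v)) / U v → exp (-(x + y))`. Comparing this with
`U (v + (x + 1) / w v) / U v → exp (-(x + 1))` for `y = c` slightly below or above `1`, the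
monotonicity of `U` forces `c / w (t v)` to lie below, resp. above, `1 / w v` eventually,
which squeezes `w (t v) / w v` to `1`.
-/

open Filter Topology Real

def IsSelfNeglecting (w : ℝ → ℝ) : Prop :=
  ∀ x : ℝ, Tendsto (fun v => w (v + x / w v) / w v) atTop (𝓝 1)

section Antitone

variable {α : Type*} {l : Filter α} {U : ℝ → ℝ}

lemma tendsto_atTop_of_antitone_of_tendsto_zero {t : α → ℝ} (hU : Antitone U)
    (hpos : ∀ v, 0 < U v) (h : Tendsto (fun a => U (t a)) l (𝓝 0)) : Tendsto t l atTop :=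
  tendsto_atTop.2 fun M =>
    (h.eventually_lt_const (hpos M)).mono fun _ ha => (hU.reflect_lt ha).le

lemma eventually_lt_of_tendsto_div_of_antitone {b p q : α → ℝ} {A B : ℝ} (hU : Antitone U)
    (hb : ∀ a, 0 < b a) (hp : Tendsto (fun a => U (p a) / b a) l (𝓝 A))
    (hq : Tendsto (fun a => U (q a) / b a) l (𝓝 B)) (hAB : A < B) :
    ∀ᶠ a in l, q a < p a := by
  filter_upwards [hp.eventually_lt hq hAB] with a ha
  exact hU.reflect_lt ((div_lt_div_iff_of_pos_right (hb a)).1 ha)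

end Antitone

section Gumbel

variable {U w : ℝ → ℝ}

lemma tendsto_add_div_atTop (hU : Antitone U) (hpos : ∀ v, 0 < U v)
    (hU0 : Tendsto U atTop (𝓝 0))
    (hUw : ∀ x : ℝ, Tendsto (fun v => U (v + x / w v) / U v) atTop (𝓝 (exp (-x)))) (x : ℝ) :
    Tendsto (fun v => v + x / w v) atTop atTop := by
  refine tendsto_atTop_of_antitone_of_tendsto_zero hU hpos ?_
  have h := (hUw x).mul hU0
  rw [mul_zero] at h
  exact h.congr fun v => div_mul_cancel₀ _ (hpos v).ne'

lemma tendsto_add_div_add_div (hU : Antitone U) (hpos : ∀ v, 0 < U v)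
    (hU0 : Tendsto U atTop (𝓝 0))
    (hUw : ∀ x : ℝ, Tendsto (fun v => U (v + x / w v) / U v) atTop (𝓝 (exp (-x))))
    (x y : ℝ) :
    Tendsto (fun v => U (v + x / w v + y / w (v + x / w v)) / U v) atTop
      (𝓝 (exp (-(x + y)))) := by
  have h := ((hUw y).comp (tendsto_add_div_atTop hU hpos hU0 hUw x)).mul (hUw x)
  rw [← exp_add, ← neg_add, add_comm y] at h
  exact h.congr fun v => div_mul_div_cancel₀ (hpos _).ne'

lemma eventually_mul_lt_add_div (hU : Antitone U) (hpos : ∀ v, 0 < U v)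
    (hU0 : Tendsto U atTop (𝓝 0)) (hw : ∀ v, 0 < w v)
    (hUw : ∀ x : ℝ, Tendsto (fun v => U (v + x / w v) / U v) atTop (𝓝 (exp (-x))))
    (x : ℝ) {c : ℝ} (hc : c < 1) :
    ∀ᶠ v in atTop, c * w v < w (v + x / w v) := by
  have h := eventually_lt_of_tendsto_div_of_antitone hU hpos (hUw (x + 1))
    (tendsto_add_div_add_div hU hpos hU0 hUw x c) (exp_lt_exp.2 (by linarith))
  filter_upwards [h] with v hv
  rw [add_div, ← add_assoc, add_lt_add_iff_left, div_lt_div_iff₀ (hw _) (hw v)] at hv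
  linarith

lemma eventually_add_div_lt_mul (hU : Antitone U) (hpos : ∀ v, 0 < U v)
    (hU0 : Tendsto U atTop (𝓝 0)) (hw : ∀ v, 0 < w v)
    (hUw : ∀ x : ℝ, Tendsto (fun v => U (v + x / w v) / U v) atTop (𝓝 (exp (-x))))
    (x : ℝ) {c : ℝ} (hc : 1 < c) :
    ∀ᶠ v in atTop, w (v + x / w v) < c * w v := by
  have h := eventually_lt_of_tendsto_div_of_antitone hU hpos
    (tendsto_add_div_add_div hU hpos hU0 hUw x c) (hUw (x + 1)) (exp_lt_exp.2 (by linarith))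
  filter_upwards [h] with v hv
  rw [add_div, ← add_assoc, add_lt_add_iff_left, div_lt_div_iff₀ (hw v) (hw _)] at hv
  linarith

theorem isSelfNeglecting_of_tendsto_div (hU : Antitone U) (hpos : ∀ v, 0 < U v)
    (hU0 : Tendsto U atTop (𝓝 0)) (hw : ∀ v, 0 < w v)
    (hUw : ∀ x : ℝ, Tendsto (fun v => U (v + x / w v) / U v) atTop (𝓝 (exp (-x)))) :
    IsSelfNeglecting w := fun x =>
  tendsto_order.2
    ⟨fun _ hc => (eventually_mul_lt_add_div hU hpos hU0 hw hUw x hc).mono fun v hv =>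
        (lt_div_iff₀ (hw v)).2 hv,
      fun _ hc => (eventually_add_div_lt_mul hU hpos hU0 hw hUw x hc).mono fun v hv =>
        (div_lt_iff₀ (hw v)).2 hv⟩

end Gumbel

theorem stmt6_general (G w : ℝ → ℝ) (hmono : Monotone G) (hG1 : ∀ v, G v < 1)
    (hGlim : Tendsto G atTop (nhds 1))
    (hw : ∀ v, 0 < w v)
    (hGumbel : ∀ x : ℝ,
      Tendsto (fun v => (1 - G (v + x / w v)) / (1 - G v)) atTop (nhds (Real.exp (-x)))) :
    ∀ x : ℝ, Tendsto (fun v => w (v + x / w v) / w v) atTop (nhds 1) := by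
  have hU0 : Tendsto (fun v => 1 - G v) atTop (𝓝 0) := by
    simpa using (tendsto_const_nhds (x := (1 : ℝ))).sub hGlim
  exact isSelfNeglecting_of_tendsto_div (fun _ _ h => sub_le_sub_left (hmono h) 1)
    (fun v => sub_pos.2 (hG1 v)) hU0 hw hGumbel

/-- If the distribution function `G` (with infinite upper endpoint) is in the
Gumbel max-domain of attraction with positive scaling function `w`, then `w` is
self-neglecting: `w(v + x/w(v))/w(v) → 1` for every `x`. -/
theorem stmt6 (G w : ℝ → ℝ) (hmono : Monotone G) (hG1 : ∀ v, G v < 1)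
    (hGlim : Tendsto G atTop (nhds 1)) (hG0 : Tendsto G atBot (nhds 0))
    (hw : ∀ v, 0 < w v)
    (hGumbel : ∀ x : ℝ,
      Tendsto (fun v => (1 - G (v + x / w v)) / (1 - G v)) atTop (nhds (Real.exp (-x)))) :
    ∀ x : ℝ, Tendsto (fun v => w (v + x / w v) / w v) atTop (nhds 1) :=
  stmt6_general G w hmono hG1 hGlim hw hGumbel
end

section
/- Let $\zeta_1 = \sum_{i=1}^m X_{i1}^2$ where $(X_{11},\dots,X_{m1}) = R(O_1,\dots,O_m)$ with $R > 0$ independent of $(O_1,\dots,O_m)$ satisfying $\sum_i O_i^2 = 1$ a.s., and $R$ has infinite upper endpoint. Let $\zeta_2 = \sum_{i=1}^m (\rho_1 X_{i1} + W_{i1})^2$ with $(W_{11},\dots,W_{m1})$ independent of the $X$'s, $\rho_1 \neq 0$. Then conditionally on $\zeta_1 = v$, $(\zeta_2 - \rho_1^2 v)/(2\rho_1\sqrt{v})$ has the same distribution as $\sum_{i=1}^m O_i W_{i1} + \frac{1}{2\rho_1\sqrt{v}}\sum_{i=1}^m W_{i1}^2$, and hence converges weakly to the distribution of $\sum_{i=1}^m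 O_i W_{i1}$ as $v \to \infty$. -/
/-!
On the sphere `∑ Oᵢ² = 1` we have `ζ₁ = R²` and
`ζ₂ = ρ₁² ζ₁ + 2 ρ₁ √ζ₁ ∑ Oᵢ Wᵢ + ∑ Wᵢ²`, a fixed function of `ζ₁` and of `(O, W)`.
Since `R` is independent of `(O, W)`, so is `ζ₁`, and conditioning on `ζ₁ = v` just substitutes
`v` in that function; normalizing leaves `∑ Oᵢ Wᵢ + ∑ Wᵢ² / (2 ρ₁ √v)`. The second summand tends
to `0` pointwise as `v → ∞`, and almost sure convergence implies convergence in distribution.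
-/

open MeasureTheory ProbabilityTheory Filter Topology

namespace ProbabilityTheory

variable {Ω β γ δ : Type*} [MeasurableSpace Ω] [MeasurableSpace β] [MeasurableSpace γ]
  [MeasurableSpace δ] {μ : Measure Ω} [IsFiniteMeasure μ] {X : Ω → β}

lemma IndepFun.indepFun_prodMk_of_prodMk {Y : Ω → γ} {Z : Ω → δ}
    (hX : Measurable X) (hY : Measurable Y) (hZ : Measurable Z)
    (hXY : IndepFun X Y μ) (hXYZ : IndepFun (fun ω => (X ω, Y ω)) Z μ) :
    IndepFun X (fun ω => (Y ω, Z ω)) μ := by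
  have hYZ : IndepFun Y Z μ := hXYZ.comp measurable_snd measurable_id
  rw [indepFun_iff_map_prod_eq_prod_map_map hX.aemeasurable (hY.prodMk hZ).aemeasurable,
    hYZ.map_prod_eq_prod_map_map hY.aemeasurable hZ.aemeasurable, ← Measure.prodAssoc_prod,
    ← hXY.map_prod_eq_prod_map_map hX.aemeasurable hY.aemeasurable,
    ← hXYZ.map_prod_eq_prod_map_map (hX.prodMk hY).aemeasurable hZ.aemeasurable,
    Measure.map_map MeasurableEquiv.prodAssoc.measurable ((hX.prodMk hY).prodMk hZ)]
  rfl

lemma IndepFun.condDistrib_ae_eq_map [StandardBorelSpace δ] [Nonempty δ] {Z : Ω → γ}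
    (hX : Measurable X) (hZ : Measurable Z) (hXZ : IndepFun X Z μ)
    {g : β × γ → δ} (hg : Measurable g) :
    ∀ᵐ x ∂μ.map X, condDistrib (fun ω => g (X ω, Z ω)) X μ x = μ.map (fun ω => g (x, Z ω)) := by
  set κ := (Kernel.id ×ₖ Kernel.const β (μ.map Z)).map g
  have hκ : ∀ x, κ x = (μ.map Z).map (fun z => g (x, z)) := fun x => by
    rw [Kernel.map_apply _ hg, Kernel.prod_apply, Kernel.id_apply, Kernel.const_apply,
      Measure.dirac_prod, Measure.map_map hg measurable_prodMk_left]
    rfl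
  have hF : Measurable fun p : β × γ => (p.1, g p) := measurable_fst.prodMk hg
  have hlaw : μ.map (fun ω => (X ω, g (X ω, Z ω))) = μ.map X ⊗ₘ κ := by
    ext s hs
    change μ.map ((fun p : β × γ => (p.1, g p)) ∘ fun ω => (X ω, Z ω)) s = _
    rw [Measure.compProd_apply hs, ← Measure.map_map hF (hX.prodMk hZ),
      hXZ.map_prod_eq_prod_map_map hX.aemeasurable hZ.aemeasurable, Measure.map_apply hF hs,
      Measure.prod_apply (hF hs)]
    refine lintegral_congr fun x => ?_
    rw [hκ, Measure.map_apply (by fun_prop) (measurable_prodMk_left hs)]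
    rfl
  filter_upwards [condDistrib_ae_eq_of_measure_eq_compProd X (by fun_prop) hlaw] with x hx
  rw [hx, hκ, Measure.map_map (by fun_prop) hZ]
  rfl

end ProbabilityTheory

lemma sum_mul_add_sq_of_sum_sq_eq_one {ι : Type*} [Fintype ι] {o : ι → ℝ}
    (ho : ∑ i, o i ^ 2 = 1) (a : ℝ) (w : ι → ℝ) :
    ∑ i, (a * o i + w i) ^ 2 = a ^ 2 + 2 * a * ∑ i, o i * w i + ∑ i, w i ^ 2 := by
  have h : ∀ i, (a * o i + w i) ^ 2 = a ^ 2 * o i ^ 2 + 2 * a * (o i * w i) + w i ^ 2 :=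
    fun i => by ring
  simp only [h, Finset.sum_add_distrib, ← Finset.mul_sum, ho, mul_one]

lemma tendsto_add_div_mul_sqrt_atTop (a b c : ℝ) :
    Tendsto (fun v => a + b / (c * Real.sqrt v)) atTop (𝓝 a) := by
  simpa only [← div_div, add_zero] using
    tendsto_const_nhds.add (tendsto_const_nhds.div_atTop Real.tendsto_sqrt_atTop)

lemma sub_div_two_mul_sqrt_eq {ρ v : ℝ} (hρ : ρ ≠ 0) (hv : 0 < v) (s q : ℝ) :
    (ρ ^ 2 * v + 2 * ρ * Real.sqrt v * s + q - ρ ^ 2 * v) / (2 * ρ * Real.sqrt v)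
      = s + q / (2 * ρ * Real.sqrt v) := by
  have hsqrt : Real.sqrt v ≠ 0 := (Real.sqrt_pos.mpr hv).ne'
  field_simp
  ring

theorem stmt12_general {Ω : Type*} [MeasurableSpace Ω] (P : Measure Ω) [IsProbabilityMeasure P]
    (m : ℕ) (ρ₁ : ℝ) (hρ₁ : ρ₁ ≠ 0)
    (R : Ω → ℝ) (O W : Fin m → Ω → ℝ)
    (hR : Measurable R) (hO : ∀ i, Measurable (O i)) (hW : ∀ i, Measurable (W i))
    (hRpos : ∀ᵐ ω ∂P, 0 < R ω)
    (hsphere : ∀ᵐ ω ∂P, ∑ i, (O i ω) ^ 2 = 1)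
    (hRO : IndepFun R (fun ω => fun i => O i ω) P)
    (hindep : IndepFun (fun ω => (R ω, fun i => O i ω)) (fun ω => fun i => W i ω) P)
    -- `ζ₁`, `ζ₂` and the representation `T v` of the conditioned normalized variable:
    (ζ₁ ζ₂ : Ω → ℝ) (hζ₁ : ζ₁ = fun ω => ∑ i, (R ω * O i ω) ^ 2)
    (hζ₂ : ζ₂ = fun ω => ∑ i, (ρ₁ * R ω * O i ω + W i ω) ^ 2)
    (T : ℝ → Ω → ℝ)
    (hT : ∀ v, T v = fun ω =>
      (∑ i, O i ω * W i ω) + (∑ i, (W i ω) ^ 2) / (2 * ρ₁ * Real.sqrt v)) :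
    (∀ᵐ v ∂(P.map ζ₁),
        ((condDistrib ζ₂ ζ₁ P) v).map (fun y => (y - ρ₁ ^ 2 * v) / (2 * ρ₁ * Real.sqrt v))
          = P.map (T v)) ∧
      (∀ f : BoundedContinuousFunction ℝ ℝ,
        Tendsto (fun v : ℝ => ∫ y, f y ∂(P.map (T v))) atTop
          (nhds (∫ y, f y ∂(P.map (fun ω => ∑ i, O i ω * W i ω))))) := by
  set Z : Ω → (Fin m → ℝ) × (Fin m → ℝ) := fun ω => (fun i => O i ω, fun i => W i ω)
  set g : ℝ × ((Fin m → ℝ) × (Fin m → ℝ)) → ℝ := fun p =>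
    ρ₁ ^ 2 * p.1 + 2 * ρ₁ * Real.sqrt p.1 * ∑ i, p.2.1 i * p.2.2 i + ∑ i, p.2.2 i ^ 2
  have hζ₁R : ζ₁ =ᵐ[P] fun ω => R ω ^ 2 := by
    filter_upwards [hsphere] with ω hω
    simpa [hζ₁] using sum_mul_add_sq_of_sum_sq_eq_one hω (R ω) 0
  have hζ₂g : ζ₂ =ᵐ[P] fun ω => g (ζ₁ ω, Z ω) := by
    filter_upwards [hsphere, hRpos, hζ₁R] with ω hω hRω hζ₁ω
    simp only [hζ₂, g, Z, hζ₁ω, Real.sqrt_sq hRω.le, sum_mul_add_sq_of_sum_sq_eq_one hω]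
    ring
  have hζ₁Z : IndepFun ζ₁ Z P :=
    ((hRO.indepFun_prodMk_of_prodMk hR (by fun_prop) (by fun_prop) hindep).comp
      (measurable_id.pow_const 2) measurable_id).congr hζ₁R.symm EventuallyEq.rfl
  have hζ₁pos : ∀ᵐ v ∂P.map ζ₁, 0 < v := by
    rw [Measure.map_congr hζ₁R, ae_map_iff (by fun_prop) measurableSet_Ioi]
    filter_upwards [hRpos] with ω hRω using pow_pos hRω 2
  refine ⟨?_, fun f => ?_⟩
  · filter_upwards [hζ₁Z.condDistrib_ae_eq_map (by rw [hζ₁]; fun_prop) (by fun_prop)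
      (by fun_prop : Measurable g), hζ₁pos] with v hv hv0
    rw [condDistrib_congr_left hζ₂g, hv, Measure.map_map (by fun_prop) (by fun_prop), hT]
    congr 1
    funext ω
    exact sub_div_two_mul_sqrt_eq hρ₁ hv0 _ _
  · have hlim : ∀ ω, Tendsto (fun v => T v ω) atTop (𝓝 (∑ i, O i ω * W i ω)) := fun ω => by
      simpa only [hT] using tendsto_add_div_mul_sqrt_atTop _ _ _
    have hdist := tendstoInDistribution_of_ae_tendsto (fun v => (by rw [hT]; fun_prop))
      (by fun_prop) (ae_of_all P hlim)
    exact ProbabilityMeasure.tendsto_iff_forall_integral_tendsto.mp hdist.tendsto f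

/-- Polar representation model: `X_{i1} = R·Oᵢ` with `R > 0` (infinite upper
endpoint) independent of `(O₁,…,Oₘ)` with `∑ Oᵢ² = 1` a.s., and `(W_{11},…,W_{m1})`
independent of the `X`'s; `ζ₁ = ∑ X_{i1}² = R²`, `ζ₂ = ∑ (ρ₁ X_{i1} + W_{i1})²`. Then,
conditionally on `ζ₁ = v` (a.e. `v`), `(ζ₂ - ρ₁²v)/(2ρ₁√v)` is distributed as
`∑ Oᵢ W_{i1} + (∑ W_{i1}²)/(2ρ₁√v)`, and hence converges weakly, as `v → ∞`, to the law of
`∑ Oᵢ W_{i1}`. -/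
theorem stmt12 {Ω : Type*} [MeasurableSpace Ω] (P : Measure Ω) [IsProbabilityMeasure P]
    (m : ℕ) (ρ₁ : ℝ) (hρ₁ : ρ₁ ≠ 0)
    (R : Ω → ℝ) (O W : Fin m → Ω → ℝ)
    (hR : Measurable R) (hO : ∀ i, Measurable (O i)) (hW : ∀ i, Measurable (W i))
    (hRpos : ∀ᵐ ω ∂P, 0 < R ω)
    (hRtail : ∀ M : ℝ, 0 < P {ω | M < R ω})
    (hsphere : ∀ᵐ ω ∂P, ∑ i, (O i ω) ^ 2 = 1)
    (hRO : IndepFun R (fun ω => fun i => O i ω) P)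
    (hindep : IndepFun (fun ω => (R ω, fun i => O i ω)) (fun ω => fun i => W i ω) P)
    -- `ζ₁`, `ζ₂` and the representation `T v` of the conditioned normalized variable:
    (ζ₁ ζ₂ : Ω → ℝ) (hζ₁ : ζ₁ = fun ω => ∑ i, (R ω * O i ω) ^ 2)
    (hζ₂ : ζ₂ = fun ω => ∑ i, (ρ₁ * R ω * O i ω + W i ω) ^ 2)
    (T : ℝ → Ω → ℝ)
    (hT : ∀ v, T v = fun ω =>
      (∑ i, O i ω * W i ω) + (∑ i, (W i ω) ^ 2) / (2 * ρ₁ * Real.sqrt v)) :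
    (∀ᵐ v ∂(P.map ζ₁),
        ((condDistrib ζ₂ ζ₁ P) v).map (fun y => (y - ρ₁ ^ 2 * v) / (2 * ρ₁ * Real.sqrt v))
          = P.map (T v)) ∧
      (∀ f : BoundedContinuousFunction ℝ ℝ,
        Tendsto (fun v : ℝ => ∫ y, f y ∂(P.map (T v))) atTop
          (nhds (∫ y, f y ∂(P.map (fun ω => ∑ i, O i ω * W i ω))))) :=
  stmt12_general P m ρ₁ hρ₁ R O W hR hO hW hRpos hsphere hRO hindep ζ₁ ζ₂ hζ₁ hζ₂ T hT
end
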